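/- For every real α > 1 and every integer n ≥ 2, the minimum cost of a feasible demand assignment on the star T(α) equals 1 (achieved by assigning the demand of all vertices to a single multiplicity of the center). Consequently, since the LP relaxation without the constraints d(v)x(u) ≥ f(v,u) has a feasible solution of value 1/α on T(α), the integrality gap of that linear program on T(α) is at least α. -/

import Mathlib

/-!
Any feasible demand assignment on a graph with positive total demand sends some demand to a
vertex, which then has multiplicity at least one, so with unit costs every cost is at least `1`.
In the star the center is adjacent to every vertex and its capacity `n` equals the total demand,
so sending all demand to it costs exactly `1`.

The relaxed LP only asks for `c(v) x(v) ≥ load(v)`, so `x(v) = load(v) / c(v)` is feasible for any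
assignment. Letting every petal serve itself and the center send its demand to one petal, all
demand is served at capacity `αn`, giving the fractional value `n / (αn) = 1 / α`.
-/

open Finset

variable {V : Type*} [Fintype V] [DecidableEq V]

/-- The closed neighborhood `N[v]` of a vertex. -/
def closedNbhd (G : SimpleGraph V) [DecidableRel G.Adj] (v : V) : Finset V :=
  insert v (G.neighborFinset v)

/-- A demand assignment: nonnegative, supported on closed neighborhoods. -/
def IsAssignment (G : SimpleGraph V) [DecidableRel G.Adj] (f : V → V → ℝ) : Prop :=
  (∀ u v, 0 ≤ f u v) ∧ ∀ u v, v ∉ closedNbhd G u → f u v = 0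

/-- Feasibility: the demand of every vertex is fully assigned. -/
def Feasible (G : SimpleGraph V) [DecidableRel G.Adj] (d : V → ℝ) (f : V → V → ℝ) : Prop :=
  IsAssignment G f ∧ ∀ u, d u ≤ ∑ v ∈ closedNbhd G u, f u v

/-- Multiplicity `x_f(v) = ⌈(Σ_{u∈N[v]} f(u,v))/c(v)⌉`. -/
noncomputable def mult (G : SimpleGraph V) [DecidableRel G.Adj] (c : V → ℝ)
    (f : V → V → ℝ) (v : V) : ℤ :=
  ⌈(∑ u ∈ closedNbhd G v, f u v) / c v⌉

/-- Cost of a demand assignment. -/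
noncomputable def cost (G : SimpleGraph V) [DecidableRel G.Adj] (w c : V → ℝ)
    (f : V → V → ℝ) : ℝ :=
  ∑ v, w v * (mult G c f v : ℝ)

/-- Optimal cost of a feasible demand assignment. -/
noncomputable def OPT (G : SimpleGraph V) [DecidableRel G.Adj] (w c d : V → ℝ) : ℝ :=
  sInf {r | ∃ f, Feasible G d f ∧ cost G w c f = r}

/-- Feasibility for the LP relaxation of capacitated domination. -/
def LPFeasible (G : SimpleGraph V) [DecidableRel G.Adj] (c d : V → ℝ)
    (x : V → ℝ) (f : V → V → ℝ) : Prop :=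
  (∀ u, 0 ≤ x u) ∧ IsAssignment G f ∧
  (∀ u, d u ≤ ∑ v ∈ closedNbhd G u, f u v) ∧
  (∀ u, ∑ v ∈ closedNbhd G u, f v u ≤ c u * x u) ∧
  (∀ u, ∀ v ∈ closedNbhd G u, f v u ≤ d v * x u)

/-- Optimal value `OPT_f(G)` of the LP relaxation. -/
noncomputable def OPTf (G : SimpleGraph V) [DecidableRel G.Adj] (w c d : V → ℝ) : ℝ :=
  sInf {r | ∃ x f, LPFeasible G c d x f ∧ ∑ u, w u * x u = r}

/-- The `n`-vertex star with center `ctr`. -/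
def starGraph (n : ℕ) (ctr : Fin n) : SimpleGraph (Fin n) where
  Adj u v := u ≠ v ∧ (u = ctr ∨ v = ctr)
  symm := ⟨fun u v h => ⟨h.1.symm, h.2.symm⟩⟩
  loopless := ⟨fun u h => h.1 rfl⟩

instance (n : ℕ) (ctr : Fin n) : DecidableRel (starGraph n ctr).Adj :=
  fun u v => inferInstanceAs (Decidable (u ≠ v ∧ (u = ctr ∨ v = ctr)))

/-- Feasibility for the LP relaxation of capacitated domination WITHOUT the
constraints `d(v)x(u) ≥ f(v,u)`. -/
def RelaxedLPFeasible {V : Type*} [Fintype V] [DecidableEq V]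
    (G : SimpleGraph V) [DecidableRel G.Adj] (c d : V → ℝ)
    (x : V → ℝ) (f : V → V → ℝ) : Prop :=
  (∀ u, 0 ≤ x u) ∧ IsAssignment G f ∧
  (∀ u, d u ≤ ∑ v ∈ closedNbhd G u, f u v) ∧
  (∀ u, ∑ v ∈ closedNbhd G u, f v u ≤ c u * x u)

section Assignment

variable (G : SimpleGraph V) [DecidableRel G.Adj]

def load (f : V → V → ℝ) (v : V) : ℝ :=
  ∑ u ∈ closedNbhd G v, f u v

def assignTo (s : V → V) (d : V → ℝ) (u v : V) : ℝ :=
  if s u = v then d u else 0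

variable {G}

lemma mem_closedNbhd_self (u : V) : u ∈ closedNbhd G u :=
  mem_insert_self _ _

lemma mem_closedNbhd_comm {u v : V} : v ∈ closedNbhd G u ↔ u ∈ closedNbhd G v := by
  simp [closedNbhd, G.adj_comm, eq_comm]

lemma load_eq_sum {f : V → V → ℝ} (hf : IsAssignment G f) (v : V) :
    load G f v = ∑ u, f u v :=
  sum_subset (subset_univ _) fun u _ hu => hf.2 u v fun h => hu (mem_closedNbhd_comm.1 h)

lemma load_nonneg {f : V → V → ℝ} (hf : IsAssignment G f) (v : V) : 0 ≤ load G f v :=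
  sum_nonneg fun u _ => hf.1 u v

lemma mult_eq_ceil_load (c : V → ℝ) (f : V → V → ℝ) (v : V) :
    mult G c f v = ⌈load G f v / c v⌉ :=
  rfl

lemma feasible_assignTo {s : V → V} {d : V → ℝ} (hs : ∀ u, s u ∈ closedNbhd G u)
    (hd : ∀ u, 0 ≤ d u) : Feasible G d (assignTo s d) := by
  refine ⟨⟨fun u v => ?_, fun u v hv => if_neg fun (h : s u = v) => hv (h ▸ hs u)⟩, fun u => ?_⟩
  · unfold assignTo
    split_ifs
    exacts [hd u, le_rfl]
  · simp [assignTo, hs u]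

lemma load_assignTo {s : V → V} {d : V → ℝ} (hf : IsAssignment G (assignTo s d)) (v : V) :
    load G (assignTo s d) v = ∑ u with s u = v, d u := by
  rw [load_eq_sum hf, sum_filter]
  rfl

lemma sum_load_div_assignTo {s : V → V} {d : V → ℝ} (hf : IsAssignment G (assignTo s d))
    (c : V → ℝ) : ∑ v, load G (assignTo s d) v / c v = ∑ u, d u / c (s u) := by
  rw [← sum_fiberwise univ s fun u => d u / c (s u)]
  refine sum_congr rfl fun v _ => ?_
  rw [load_assignTo hf, sum_div]
  exact sum_congr rfl fun u hu => by rw [(mem_filter.1 hu).2]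

end Assignment

section IntegerCost

variable {G : SimpleGraph V} [DecidableRel G.Adj] {c d : V → ℝ} {f : V → V → ℝ}

lemma one_le_cost (hc : ∀ v, 0 < c v) (hd : ∃ u, 0 < d u) (hf : Feasible G d f) :
    1 ≤ cost G (fun _ => 1) c f := by
  obtain ⟨u, hu⟩ := hd
  obtain ⟨v, hvu, hfuv⟩ : ∃ v ∈ closedNbhd G u, 0 < f u v :=
    exists_lt_of_sum_lt (by simpa using hu.trans_le (hf.2 u))
  have hload : 0 < load G f v :=
    hfuv.trans_le (single_le_sum (fun w _ => hf.1.1 w v) (mem_closedNbhd_comm.1 hvu))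
  have hmult_nonneg (w : V) : (0 : ℝ) ≤ mult G c f w := by
    exact_mod_cast Int.ceil_nonneg (div_nonneg (load_nonneg hf.1 w) (hc w).le)
  calc (1 : ℝ) ≤ mult G c f v := by exact_mod_cast Int.ceil_pos.2 (div_pos hload (hc v))
    _ ≤ ∑ w, (mult G c f w : ℝ) := single_le_sum (fun w _ => hmult_nonneg w) (mem_univ v)
    _ = cost G (fun _ => 1) c f := by simp [cost]

lemma cost_assignTo_const_le_one {ctr : V} (hctr : ∀ u, ctr ∈ closedNbhd G u)
    (hd : ∀ u, 0 ≤ d u) (hc : 0 < c ctr) (hcap : ∑ u, d u ≤ c ctr) :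
    cost G (fun _ => 1) c (assignTo (fun _ => ctr) d) ≤ 1 := by
  have hf := (feasible_assignTo hctr hd).1
  have hmult_ctr : mult G c (assignTo (fun _ => ctr) d) ctr ≤ 1 := by
    rw [mult_eq_ceil_load, load_assignTo hf, filter_true_of_mem fun _ _ => rfl, Int.ceil_le]
    exact_mod_cast (div_le_one hc).2 hcap
  have hmult_other (v : V) (hv : v ≠ ctr) : mult G c (assignTo (fun _ => ctr) d) v = 0 := by
    rw [mult_eq_ceil_load, load_assignTo hf, filter_false_of_mem fun _ _ => hv.symm]
    simp
  rw [cost, sum_eq_single ctr (fun v _ hv => by simp [hmult_other v hv]) (by simp), one_mul]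
  exact_mod_cast hmult_ctr

lemma OPT_eq_one_of_universal {ctr : V} (hctr : ∀ u, ctr ∈ closedNbhd G u)
    (hc : ∀ v, 0 < c v) (hd : ∀ u, 0 ≤ d u) (hd_pos : ∃ u, 0 < d u)
    (hcap : ∑ u, d u ≤ c ctr) : OPT G (fun _ => 1) c d = 1 := by
  have hfeas := feasible_assignTo hctr hd
  have hlower : ∀ r ∈ {r | ∃ f, Feasible G d f ∧ cost G (fun _ => 1) c f = r}, 1 ≤ r := by
    rintro r ⟨f, hf, rfl⟩
    exact one_le_cost hc hd_pos hf
  refine le_antisymm ?_ (le_csInf ⟨_, _, hfeas, rfl⟩ hlower)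
  exact (csInf_le ⟨1, hlower⟩ ⟨_, hfeas, rfl⟩).trans
    (cost_assignTo_const_le_one hctr hd (hc ctr) hcap)

end IntegerCost

section RelaxedLP

variable {G : SimpleGraph V} [DecidableRel G.Adj] {c d : V → ℝ} {f : V → V → ℝ}

lemma relaxedLPFeasible_load_div (hc : ∀ v, 0 < c v) (hf : Feasible G d f) :
    RelaxedLPFeasible G c d (fun v => load G f v / c v) f := by
  refine ⟨fun v => div_nonneg (load_nonneg hf.1 v) (hc v).le, hf.1, hf.2, fun v => ?_⟩
  rw [mul_div_cancel₀ _ (hc v).ne']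
  rfl

lemma sInf_relaxedLP_le {w x : V → ℝ} (hw : ∀ u, 0 ≤ w u) (hx : RelaxedLPFeasible G c d x f) :
    sInf {r | ∃ x f, RelaxedLPFeasible G c d x f ∧ ∑ u, w u * x u = r} ≤ ∑ u, w u * x u := by
  refine csInf_le ⟨0, ?_⟩ ⟨x, f, hx, rfl⟩
  rintro r ⟨x', f', hx', rfl⟩
  exact sum_nonneg fun u _ => mul_nonneg (hw u) (hx'.1 u)

end RelaxedLP

section Star

lemma starGraph_ctr_mem_closedNbhd {n : ℕ} (ctr u : Fin n) :
    ctr ∈ closedNbhd (starGraph n ctr) u := by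
  rcases eq_or_ne u ctr with rfl | h
  · exact mem_closedNbhd_self _
  · exact mem_insert_of_mem ((SimpleGraph.mem_neighborFinset _ _ _).2 ⟨h, Or.inr rfl⟩)

/-- The capacities of the star `T(α)`. -/
def starCapacity (α : ℝ) (n : ℕ) (ctr : Fin n) (v : Fin n) : ℝ :=
  if v = ctr then (n : ℝ) else α * n

variable {α : ℝ} {n : ℕ} {ctr : Fin n}

lemma starCapacity_pos (hα : 0 < α) (hn : 0 < n) (v : Fin n) : 0 < starCapacity α n ctr v := by
  have : (0 : ℝ) < n := Nat.cast_pos.2 hn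
  unfold starCapacity
  split_ifs
  exacts [this, mul_pos hα this]

lemma OPT_star (hα : 0 < α) (hn : 0 < n) :
    OPT (starGraph n ctr) (fun _ => 1) (starCapacity α n ctr) (fun _ => 1) = 1 :=
  OPT_eq_one_of_universal (starGraph_ctr_mem_closedNbhd ctr) (starCapacity_pos hα hn)
    (fun _ => zero_le_one) ⟨ctr, one_pos⟩ (by simp [starCapacity])

lemma exists_relaxedLP_star (hα : 0 < α) (hn : 0 < n) {p : Fin n} (hp : p ≠ ctr) :
    ∃ x f, RelaxedLPFeasible (starGraph n ctr) (starCapacity α n ctr) (fun _ => 1) x f ∧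
      ∑ u, (1 : ℝ) * x u = 1 / α := by
  set s : Fin n → Fin n := fun u => if u = ctr then p else u
  have hs_mem (u : Fin n) : s u ∈ closedNbhd (starGraph n ctr) u := by
    by_cases hu : u = ctr
    · simpa [s, hu] using mem_closedNbhd_comm.1 (starGraph_ctr_mem_closedNbhd ctr p)
    · simpa [s, hu] using mem_closedNbhd_self u
  have hs_petal (u : Fin n) : s u ≠ ctr := by
    by_cases hu : u = ctr <;> simp [s, hu, hp]
  have hfeas := feasible_assignTo hs_mem (d := fun _ => 1) fun _ => zero_le_one
  refine ⟨_, _, relaxedLPFeasible_load_div (starCapacity_pos hα hn) hfeas, ?_⟩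
  simp only [one_mul, sum_load_div_assignTo hfeas.1, starCapacity, hs_petal, if_false, sum_const,
    card_univ, Fintype.card_fin, nsmul_eq_mul]
  have : (n : ℝ) ≠ 0 := by positivity
  field_simp

end Star

/-- on the star `T(α)`, the minimum cost of a feasible demand
assignment equals `1`; since the LP relaxation without the constraints
`d(v)x(u) ≥ f(v,u)` has a feasible solution of value `1/α`, the integrality
gap of that LP on `T(α)` is at least `α`. -/
theorem star_integrality_gap (α : ℝ) (hα : 1 < α) (n : ℕ) (hn : 2 ≤ n) :
    OPT (starGraph n ⟨0, by omega⟩) (fun _ => 1)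
        (fun v => if v = ⟨0, by omega⟩ then (n : ℝ) else α * n) (fun _ => 1) = 1 ∧
    sInf {r | ∃ x f, RelaxedLPFeasible (starGraph n ⟨0, by omega⟩)
        (fun v => if v = ⟨0, by omega⟩ then (n : ℝ) else α * n) (fun _ => 1) x f ∧
        ∑ u, (1 : ℝ) * x u = r} ≤ 1 / α ∧
    α * sInf {r | ∃ x f, RelaxedLPFeasible (starGraph n ⟨0, by omega⟩)
        (fun v => if v = ⟨0, by omega⟩ then (n : ℝ) else α * n) (fun _ => 1) x f ∧
        ∑ u, (1 : ℝ) * x u = r} ≤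
      OPT (starGraph n ⟨0, by omega⟩) (fun _ => 1)
        (fun v => if v = ⟨0, by omega⟩ then (n : ℝ) else α * n) (fun _ => 1) := by
  have hα₀ : 0 < α := by linarith
  have hOPT := OPT_star (ctr := ⟨0, by omega⟩) hα₀ (by omega : 0 < n)
  obtain ⟨x, f, hx, hval⟩ :=
    exists_relaxedLP_star (n := n) (ctr := ⟨0, by omega⟩) (p := ⟨1, by omega⟩) hα₀ (by omega)
      (by simp)
  have hLP := (sInf_relaxedLP_le (fun _ => zero_le_one) hx).trans_eq hval
  refine ⟨hOPT, hLP, ?_⟩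
  calc _ ≤ α * (1 / α) := mul_le_mul_of_nonneg_left hLP hα₀.le
    _ = 1 := by field_simp
    _ = _ := hOPT.symm
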